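/- Let g_α(x) = x² − l_α(x), where l_α is the pseudo Huber loss. Then for all x with α²x² < 1, the second derivative satisfies |2 − l_α''(x)| ≤ 3α²x². -/

import Mathlib

/-! With `t = α²x²` one has `l_α''(x) = 2 (1 + t)^(-3/2)`. Writing `(1 + t)⁻¹ = 1 + s` with
`s = -t/(1 + t) ≥ -1`, Bernoulli's inequality for the exponent `3/2` gives
`(1 + t)^(-3/2) ≥ 1 - (3/2) t/(1 + t) ≥ 1 - (3/2) t`, whence `0 ≤ 2 - l_α''(x) ≤ 3t`. -/

/-- The second derivative of the pseudo Huber loss. -/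
noncomputable def pseudoHuber'' (α x : ℝ) : ℝ := 2 * (α ^ 3)⁻¹ / ((α ^ 2)⁻¹ + x ^ 2) ^ ((3 : ℝ) / 2)

open Real

theorem one_sub_rpow_neg_le_mul {t p : ℝ} (ht : 0 ≤ t) (hp : 1 ≤ p) :
    1 - (1 + t) ^ (-p) ≤ p * t := by
  have hpos : 0 < 1 + t := by linarith
  have hbernoulli : 1 + p * ((1 + t)⁻¹ - 1) ≤ (1 + t) ^ (-p) := by
    rw [rpow_neg hpos.le, ← inv_rpow hpos.le]
    simpa using one_add_mul_self_le_rpow_one_add (s := (1 + t)⁻¹ - 1) (by simp; positivity) hp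
  have hinv : 1 - (1 + t)⁻¹ ≤ t := by
    calc 1 - (1 + t)⁻¹ = t / (1 + t) := by field_simp; ring
      _ ≤ t := div_le_self ht (by linarith)
  nlinarith

theorem abs_one_sub_rpow_neg_le_mul {t p : ℝ} (ht : 0 ≤ t) (hp : 1 ≤ p) :
    |1 - (1 + t) ^ (-p)| ≤ p * t := by
  rw [abs_of_nonneg (sub_nonneg.2 (rpow_le_one_of_one_le_of_nonpos (by linarith) (by linarith)))]
  exact one_sub_rpow_neg_le_mul ht hp

theorem pseudoHuber''_eq {α : ℝ} (hα : 0 < α) (x : ℝ) :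
    pseudoHuber'' α x = 2 * (1 + α ^ 2 * x ^ 2) ^ (-(3 / 2 : ℝ)) := by
  have hscale : (α ^ 2)⁻¹ + x ^ 2 = (α ^ 2)⁻¹ * (1 + α ^ 2 * x ^ 2) := by
    field_simp
  have hpow : ((α ^ 2)⁻¹) ^ ((3 : ℝ) / 2) = (α ^ 3)⁻¹ := by
    rw [inv_rpow (by positivity), ← rpow_natCast, ← rpow_mul hα.le]
    norm_num
  rw [pseudoHuber'', hscale, mul_rpow (by positivity) (by positivity), hpow,
    rpow_neg (by positivity)]
  field_simp

theorem stmt_6_general (α : ℝ) (hα : 0 < α) (x : ℝ) :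
    |2 - pseudoHuber'' α x| ≤ 3 * α ^ 2 * x ^ 2 := by
  have hbound := abs_one_sub_rpow_neg_le_mul (by positivity : 0 ≤ α ^ 2 * x ^ 2)
    (by norm_num : (1 : ℝ) ≤ 3 / 2)
  calc |2 - pseudoHuber'' α x| = 2 * |1 - (1 + α ^ 2 * x ^ 2) ^ (-(3 / 2 : ℝ))| := by
        rw [pseudoHuber''_eq hα, ← abs_two, ← abs_mul, abs_two, mul_sub, mul_one]
    _ ≤ 3 * α ^ 2 * x ^ 2 := by linarith

theorem stmt_6 (α : ℝ) (hα : 0 < α) (x : ℝ) (hx : α ^ 2 * x ^ 2 < 1) :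
    |2 - pseudoHuber'' α x| ≤ 3 * α ^ 2 * x ^ 2 :=
  stmt_6_general α hα x
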